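/- Let F be a nonarchimedean local field with residue field of cardinality q, and let γ : F^n → F^n be given by an F-polynomial map with coefficients in the valuation ring O and |det Dγ| = 1 on O^n. Let μ be the Haar measure on F^n with μ(O^n) = 1. Then the pushforward γ_*(μ|_{O^n}) equals h · μ where h(y) = #{x ∈ O^n : γ(x) = y}, and if γ has at most M geometric preimages at every point, then γ_*(μ|_{O^n}) ≤ M · μ|_{γ(O^n)}. -/

import Mathlib

/-!
Write `𝒪` for the unit disc of `F` and `𝒪ⁿ` for the unit polydisc. Taylor's formula with
coefficients in `𝒪` gives `γ (x + h) = γ x + Dγ(x) h + O(‖h‖²)` on `𝒪ⁿ`, and `Dγ(x) ∈ GLₙ(𝒪)` acts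
isometrically; hence `γ` is an isometry on every residue disc `B(c, 1) ⊆ 𝒪ⁿ`, and Newton's
iteration shows that it maps `B(c, 1)` onto `B(γ c, 1)`. Since small balls generate the Borel sets
and `μ` is translation invariant, `γ` pushes `μ|B(c, 1)` forward to `μ|B(γ c, 1)`. Summing over
the finitely many residue discs of `𝒪ⁿ` counts, above each `y`, the points of `𝒪ⁿ` sent to `y`.

That there are finitely many residue discs, i.e. that `𝒪` is compact, comes from `μ` itself:
a measure invariant under a countably infinite group of translations gives the whole space
measure `0` or `∞` (Vitali), so `𝒪` has finitely many cosets of each ball around `0`.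
-/

open MvPolynomial MeasureTheory Metric Set Filter Topology
open scoped ENNReal

namespace Matrix

variable {m n F : Type*} [Fintype n] [NormedField F] [IsUltrametricDist F]

theorem norm_dotProduct_le_of_norm_le_one {a : n → F} (ha : ∀ j, ‖a j‖ ≤ 1) (v : n → F) :
    ‖a ⬝ᵥ v‖ ≤ ‖v‖ :=
  IsUltrametricDist.norm_sum_le_of_forall_le_of_nonneg (norm_nonneg v) fun j _ => by
    rw [norm_mul]
    exact (mul_le_of_le_one_left (norm_nonneg _) (ha j)).trans (norm_le_pi_norm v j)

theorem norm_mulVec_le_of_norm_le_one [Fintype m] {A : Matrix m n F} (hA : ∀ i j, ‖A i j‖ ≤ 1)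
    (v : n → F) : ‖A *ᵥ v‖ ≤ ‖v‖ :=
  (pi_norm_le_iff_of_nonneg (norm_nonneg v)).2 fun i => norm_dotProduct_le_of_norm_le_one (hA i) v

variable [DecidableEq n]

theorem norm_det_le_one {A : Matrix n n F} (hA : ∀ i j, ‖A i j‖ ≤ 1) : ‖A.det‖ ≤ 1 := by
  rw [det_apply']
  refine IsUltrametricDist.norm_sum_le_of_forall_le_of_nonneg zero_le_one fun σ _ => ?_
  rw [norm_mul, norm_prod]
  refine mul_le_one₀ ?_ (Finset.prod_nonneg fun _ _ => norm_nonneg _)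
    (Finset.prod_le_one (fun _ _ => norm_nonneg _) fun i _ => hA _ _)
  rcases Int.units_eq_one_or (Equiv.Perm.sign σ) with h | h <;> simp [h]

theorem norm_adjugate_apply_le_one {A : Matrix n n F} (hA : ∀ i j, ‖A i j‖ ≤ 1) (i j : n) :
    ‖A.adjugate i j‖ ≤ 1 := by
  rw [adjugate_apply]
  refine norm_det_le_one fun k l => ?_
  rw [updateRow_apply]
  split_ifs
  · by_cases hil : i = l <;> simp [hil]
  · exact hA k l

theorem norm_inv_apply_le_one {A : Matrix n n F} (hA : ∀ i j, ‖A i j‖ ≤ 1) (hdet : ‖A.det‖ = 1)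
    (i j : n) : ‖A⁻¹ i j‖ ≤ 1 := by
  rw [inv_def, Ring.inverse_eq_inv', smul_apply, smul_eq_mul, norm_mul, norm_inv, hdet, inv_one,
    one_mul]
  exact norm_adjugate_apply_le_one hA i j

theorem norm_mulVec_eq_of_norm_det_eq_one {A : Matrix n n F} (hA : ∀ i j, ‖A i j‖ ≤ 1)
    (hdet : ‖A.det‖ = 1) (v : n → F) : ‖A *ᵥ v‖ = ‖v‖ := by
  refine le_antisymm (norm_mulVec_le_of_norm_le_one hA v) ?_
  calc ‖v‖ = ‖A⁻¹ *ᵥ (A *ᵥ v)‖ := by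
        rw [mulVec_mulVec, nonsing_inv_mul A (isUnit_iff_ne_zero.2 (norm_ne_zero_iff.1
          (hdet ▸ one_ne_zero))), one_mulVec]
    _ ≤ ‖A *ᵥ v‖ := norm_mulVec_le_of_norm_le_one (norm_inv_apply_le_one hA hdet) _

end Matrix

theorem exists_le_zero_of_forall_exists_dist_le {X : Type*} [MetricSpace X] [CompleteSpace X]
    {s : Set X} (hs : IsClosed s) {e : X → ℝ} (he : Continuous e) {q : ℝ} (hq₀ : 0 ≤ q)
    (hq : q < 1) (hstep : ∀ x ∈ s, ∃ y ∈ s, dist x y ≤ e x ∧ e y ≤ q * e x) {x₀ : X}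
    (hx₀ : x₀ ∈ s) : ∃ x ∈ s, e x ≤ 0 := by
  choose! next hnext_mem hnext_dist hnext_le using hstep
  set u : ℕ → X := fun k => next^[k] x₀
  have hu_succ : ∀ k, u (k + 1) = next (u k) := fun k => Function.iterate_succ_apply' next k x₀
  have hu : ∀ k, u k ∈ s ∧ e (u k) ≤ q ^ k * e x₀ := by
    intro k
    induction k with
    | zero => simpa [u] using hx₀
    | succ k ih =>
      rw [hu_succ, pow_succ', mul_assoc]
      exact ⟨hnext_mem _ ih.1, (hnext_le _ ih.1).trans (mul_le_mul_of_nonneg_left ih.2 hq₀)⟩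
  have hcauchy : CauchySeq u := cauchySeq_of_le_geometric q (e x₀) hq fun k => by
    rw [hu_succ, mul_comm]
    exact (hnext_dist _ (hu k).1).trans (hu k).2
  obtain ⟨x, hx⟩ := cauchySeq_tendsto_of_complete hcauchy
  refine ⟨x, hs.mem_of_tendsto hx (Eventually.of_forall fun k => (hu k).1), ?_⟩
  have hlim : Tendsto (fun k => q ^ k * e x₀) atTop (𝓝 0) := by
    simpa using (tendsto_pow_atTop_nhds_zero_of_lt_one hq₀ hq).mul_const (e x₀)
  exact le_of_tendsto_of_tendsto' ((he.tendsto x).comp hx) hlim fun k => (hu k).2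

namespace MvPolynomial

section UnitBallTaylor

variable {σ F : Type*} [Fintype σ] [NormedField F] [IsUltrametricDist F]

variable (σ F) in
/-- These estimates are stable under products, so they hold for every polynomial with
coefficients in the unit ball. -/
def unitBallTaylor : Subsemiring (MvPolynomial σ F) where
  carrier := {p | ∀ x h : σ → F, ‖x‖ ≤ 1 → ‖h‖ ≤ 1 →
    ‖eval x p‖ ≤ 1 ∧ (∀ j, ‖eval x (pderiv j p)‖ ≤ 1) ∧
      ‖eval (x + h) p - eval x p - ∑ j, eval x (pderiv j p) * h j‖ ≤ ‖h‖ ^ 2}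
  zero_mem' x h _ _ := by simp
  one_mem' x h _ _ := by simp
  add_mem' {p q} hp hq x h hx hh := by
    obtain ⟨hp₀, hp₁, hp₂⟩ := hp x h hx hh
    obtain ⟨hq₀, hq₁, hq₂⟩ := hq x h hx hh
    refine ⟨?_, fun j => ?_, ?_⟩
    · simpa using (IsUltrametricDist.norm_add_le_max _ _).trans (max_le hp₀ hq₀)
    · simpa using (IsUltrametricDist.norm_add_le_max _ _).trans (max_le (hp₁ j) (hq₁ j))
    · have hsplit : eval (x + h) (p + q) - eval x (p + q) -
            ∑ j, eval x (pderiv j (p + q)) * h j =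
          (eval (x + h) p - eval x p - ∑ j, eval x (pderiv j p) * h j) +
            (eval (x + h) q - eval x q - ∑ j, eval x (pderiv j q) * h j) := by
        simp only [map_add, add_mul, Finset.sum_add_distrib]; ring
      rw [hsplit]
      exact (IsUltrametricDist.norm_add_le_max _ _).trans (max_le hp₂ hq₂)
  mul_mem' {p q} hp hq x h hx hh := by
    have hxh : ‖x + h‖ ≤ 1 := (IsUltrametricDist.norm_add_le_max _ _).trans (max_le hx hh)
    obtain ⟨hp₀, hp₁, hp₂⟩ := hp x h hx hh
    obtain ⟨hq₀, hq₁, hq₂⟩ := hq x h hx hh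
    have hq₀' := (hq (x + h) h hxh hh).1
    set P := eval x p
    set Q := eval x q
    set Lp := ∑ j, eval x (pderiv j p) * h j
    set Lq := ∑ j, eval x (pderiv j q) * h j
    have hLp : ‖Lp‖ ≤ ‖h‖ := Matrix.norm_dotProduct_le_of_norm_le_one hp₁ h
    have hLq : ‖Lq‖ ≤ ‖h‖ := Matrix.norm_dotProduct_le_of_norm_le_one hq₁ h
    refine ⟨?_, fun j => ?_, ?_⟩
    · simpa using mul_le_one₀ hp₀ (norm_nonneg _) hq₀
    · rw [Derivation.leibniz, map_add, smul_eq_mul, smul_eq_mul, map_mul, map_mul]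
      refine (IsUltrametricDist.norm_add_le_max _ _).trans (max_le ?_ ?_) <;> rw [norm_mul]
      · exact mul_le_one₀ hp₀ (norm_nonneg _) (hq₁ j)
      · exact mul_le_one₀ hq₀ (norm_nonneg _) (hp₁ j)
    · have hL : ∑ j, eval x (pderiv j (p * q)) * h j = P * Lq + Q * Lp := by
        simp only [Derivation.leibniz, smul_eq_mul, map_add, map_mul, add_mul, mul_assoc,
          Finset.sum_add_distrib, ← Finset.mul_sum, P, Q, Lp, Lq]
      have hexpand : eval (x + h) (p * q) - eval x (p * q) - (P * Lq + Q * Lp) =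
          P * (eval (x + h) q - Q - Lq) + (eval (x + h) p - P - Lp) * eval (x + h) q +
            Lp * (eval (x + h) q - Q) := by
        simp only [map_mul, P, Q]; ring
      have hQ : ‖eval (x + h) q - Q‖ ≤ ‖h‖ := by
        rw [show eval (x + h) q - Q = (eval (x + h) q - Q - Lq) + Lq by ring]
        exact (IsUltrametricDist.norm_add_le_max _ _).trans
          (max_le (hq₂.trans (pow_le_of_le_one (norm_nonneg _) hh two_ne_zero)) hLq)
      rw [hL, hexpand]
      refine (IsUltrametricDist.norm_add_le_max _ _).trans (max_le
        ((IsUltrametricDist.norm_add_le_max _ _).trans (max_le ?_ ?_)) ?_) <;> rw [norm_mul]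
      · exact (mul_le_of_le_one_left (norm_nonneg _) hp₀).trans hq₂
      · exact (mul_le_of_le_one_right (norm_nonneg _) hq₀').trans hp₂
      · rw [sq]; exact mul_le_mul hLp hQ (norm_nonneg _) (norm_nonneg _)

theorem C_mem_unitBallTaylor {c : F} (hc : ‖c‖ ≤ 1) : C c ∈ unitBallTaylor σ F :=
  fun x h _ _ => by simpa using hc

theorem X_mem_unitBallTaylor (i : σ) : X i ∈ unitBallTaylor σ F := fun x h hx _ => by
  classical
  refine ⟨by simpa using (norm_le_pi_norm x i).trans hx, fun j => ?_, ?_⟩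
  · rw [pderiv_X]; by_cases hij : i = j <;> simp [hij]
  · simp [pderiv_X, Pi.single_apply]

theorem mem_unitBallTaylor_of_norm_coeff_le_one {p : MvPolynomial σ F}
    (hp : ∀ m, ‖p.coeff m‖ ≤ 1) : p ∈ unitBallTaylor σ F := by
  rw [p.as_sum]
  refine Subsemiring.sum_mem _ fun m _ => ?_
  rw [monomial_eq]
  exact Subsemiring.mul_mem _ (C_mem_unitBallTaylor (hp m))
    (Subsemiring.prod_mem _ fun i _ => Subsemiring.pow_mem _ (X_mem_unitBallTaylor i) _)

end UnitBallTaylor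

section PolyMap

open Matrix

variable {σ F : Type*} [NormedField F]

noncomputable def polyMap (γ : σ → MvPolynomial σ F) (x : σ → F) : σ → F :=
  fun i => eval x (γ i)

noncomputable def jacobian (γ : σ → MvPolynomial σ F) (x : σ → F) : Matrix σ σ F :=
  Matrix.of fun i j => eval x (pderiv j (γ i))

theorem continuous_polyMap (γ : σ → MvPolynomial σ F) : Continuous (polyMap γ) :=
  continuous_pi fun i => continuous_eval (γ i)

variable [Fintype σ] [IsUltrametricDist F] {γ : σ → MvPolynomial σ F}
  (hγ : ∀ i, γ i ∈ unitBallTaylor σ F)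
include hγ

theorem norm_jacobian_apply_le_one {x : σ → F} (hx : ‖x‖ ≤ 1) (i j : σ) :
    ‖jacobian γ x i j‖ ≤ 1 :=
  (hγ i x 0 hx (by simp)).2.1 j

theorem norm_polyMap_add_sub_sub_le {x h : σ → F} (hx : ‖x‖ ≤ 1) (hh : ‖h‖ ≤ 1) :
    ‖polyMap γ (x + h) - polyMap γ x - jacobian γ x *ᵥ h‖ ≤ ‖h‖ ^ 2 :=
  (pi_norm_le_iff_of_nonneg (by positivity)).2 fun i => (hγ i x h hx hh).2.2

variable [DecidableEq σ] (hJ : ∀ x : σ → F, ‖x‖ ≤ 1 → ‖(jacobian γ x).det‖ = 1)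
include hJ

theorem norm_polyMap_sub_polyMap {x y : σ → F} (hx : ‖x‖ ≤ 1) (hxy : ‖y - x‖ < 1) :
    ‖polyMap γ y - polyMap γ x‖ = ‖y - x‖ := by
  set h := y - x
  rcases eq_or_ne h 0 with h0 | h0
  · rw [h0, norm_zero, sub_eq_zero.1 h0, sub_self, norm_zero]
  have hJh : ‖jacobian γ x *ᵥ h‖ = ‖h‖ :=
    norm_mulVec_eq_of_norm_det_eq_one (norm_jacobian_apply_le_one hγ hx) (hJ x hx) h
  have hR : ‖polyMap γ (x + h) - polyMap γ x - jacobian γ x *ᵥ h‖ < ‖jacobian γ x *ᵥ h‖ := by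
    rw [hJh]
    exact (norm_polyMap_add_sub_sub_le hγ hx hxy.le).trans_lt
      (pow_lt_self_of_lt_one₀ (norm_pos_iff.2 h0) hxy one_lt_two)
  rw [← add_sub_cancel x y, ← hJh,
    show polyMap γ (x + h) - polyMap γ x = jacobian γ x *ᵥ h +
      (polyMap γ (x + h) - polyMap γ x - jacobian γ x *ᵥ h) by abel,
    IsUltrametricDist.norm_add_eq_max_of_norm_ne_norm hR.ne', max_eq_left hR.le]

theorem exists_newton_step {x y : σ → F} (hx : ‖x‖ ≤ 1) (hy : ‖y - polyMap γ x‖ ≤ 1) :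
    ∃ h, ‖h‖ ≤ ‖y - polyMap γ x‖ ∧ ‖y - polyMap γ (x + h)‖ ≤ ‖y - polyMap γ x‖ ^ 2 := by
  set J := jacobian γ x
  set h := J⁻¹ *ᵥ (y - polyMap γ x)
  have hJunit : IsUnit J.det := isUnit_iff_ne_zero.2 (norm_ne_zero_iff.1 (by simp [J, hJ x hx]))
  have hh : ‖h‖ ≤ ‖y - polyMap γ x‖ := norm_mulVec_le_of_norm_le_one
    (norm_inv_apply_le_one (norm_jacobian_apply_le_one hγ hx) (hJ x hx)) _
  have hJh : J *ᵥ h = y - polyMap γ x := by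
    rw [mulVec_mulVec, mul_nonsing_inv J hJunit, one_mulVec]
  refine ⟨h, hh, ?_⟩
  calc ‖y - polyMap γ (x + h)‖ = ‖polyMap γ (x + h) - polyMap γ x - J *ᵥ h‖ := by
        rw [hJh, norm_sub_rev]; congr 1; abel
    _ ≤ ‖h‖ ^ 2 := norm_polyMap_add_sub_sub_le hγ hx (hh.trans hy)
    _ ≤ ‖y - polyMap γ x‖ ^ 2 := pow_le_pow_left₀ (norm_nonneg _) hh 2

theorem exists_polyMap_eq [CompleteSpace F] {a y : σ → F} (ha : ‖a‖ ≤ 1)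
    (hy : ‖y - polyMap γ a‖ < 1) : ∃ x, ‖x - a‖ ≤ ‖y - polyMap γ a‖ ∧ polyMap γ x = y := by
  set r := ‖y - polyMap γ a‖
  have hball : ∀ x ∈ closedBall a r, ‖x‖ ≤ 1 ∧ ‖y - polyMap γ x‖ ≤ r := by
    intro x hx
    rw [mem_closedBall, dist_eq_norm] at hx
    have hx1 : ‖x‖ ≤ 1 := by
      simpa using (IsUltrametricDist.norm_add_le_max (x - a) a).trans (max_le (hx.trans hy.le) ha)
    refine ⟨hx1, ?_⟩
    rw [← sub_add_sub_cancel y (polyMap γ a) (polyMap γ x)]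
    refine (IsUltrametricDist.norm_add_le_max _ _).trans (max_le le_rfl ?_)
    rw [norm_polyMap_sub_polyMap hγ hJ hx1 (by rw [norm_sub_rev]; exact hx.trans_lt hy),
      norm_sub_rev]
    exact hx
  have hstep : ∀ x ∈ closedBall a r, ∃ x' ∈ closedBall a r,
      dist x x' ≤ ‖y - polyMap γ x‖ ∧ ‖y - polyMap γ x'‖ ≤ r * ‖y - polyMap γ x‖ := by
    intro x hx
    obtain ⟨hx1, hxr⟩ := hball x hx
    obtain ⟨h, hh, hnewton⟩ := exists_newton_step hγ hJ hx1 (hxr.trans hy.le)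
    refine ⟨x + h, ?_, by simpa [dist_eq_norm] using hh, ?_⟩
    · rw [mem_closedBall, dist_eq_norm, add_sub_right_comm]
      exact (IsUltrametricDist.norm_add_le_max _ _).trans
        (max_le (by simpa [dist_eq_norm] using hx) (hh.trans hxr))
    · rw [sq] at hnewton
      exact hnewton.trans (mul_le_mul_of_nonneg_right hxr (norm_nonneg _))
  obtain ⟨x, hx, hxy⟩ := exists_le_zero_of_forall_exists_dist_le isClosed_closedBall
    (continuous_const.sub (continuous_polyMap γ)).norm (norm_nonneg _) hy hstep
    (mem_closedBall_self (norm_nonneg _))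
  exact ⟨x, by simpa [dist_eq_norm] using hx, (sub_eq_zero.1 (norm_le_zero_iff.1 hxy)).symm⟩

theorem dist_polyMap_polyMap {x y : σ → F} (hy : ‖y‖ ≤ 1) (hxy : dist x y < 1) :
    dist (polyMap γ x) (polyMap γ y) = dist x y := by
  rw [dist_eq_norm] at hxy ⊢
  rw [dist_eq_norm, norm_polyMap_sub_polyMap hγ hJ hy hxy]

theorem ball_subset_image_polyMap [CompleteSpace F] {c : σ → F} (hc : ‖c‖ ≤ 1) :
    ball (polyMap γ c) 1 ⊆ polyMap γ '' ball c 1 := fun y hy => by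
  obtain ⟨x, hx, rfl⟩ := exists_polyMap_eq hγ hJ hc (mem_ball_iff_norm.1 hy)
  exact ⟨x, mem_ball_iff_norm.2 (hx.trans_lt (mem_ball_iff_norm.1 hy)), rfl⟩

end PolyMap

end MvPolynomial

section FiniteResidues

theorem AddSubgroup.exists_le_countable_infinite {G : Type*} [AddCommGroup G] {P : AddSubgroup G}
    (hP : (P : Set G).Infinite) :
    ∃ C : AddSubgroup G, C ≤ P ∧ (C : Set G).Countable ∧ (C : Set G).Infinite := by
  set g : ℕ → G := fun k => hP.natEmbedding _ k
  refine ⟨AddSubgroup.closure (range g), (AddSubgroup.closure_le P).2 ?_, ?_, ?_⟩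
  · rintro _ ⟨k, rfl⟩
    exact (hP.natEmbedding _ k).2
  · rw [← Submodule.span_int_eq_addSubgroupClosure, Submodule.coe_toAddSubgroup,
      ← Finsupp.range_linearCombination, LinearMap.coe_range]
    exact countable_range _
  · refine (infinite_range_of_injective fun k l hkl => ?_).mono AddSubgroup.subset_closure
    exact (hP.natEmbedding _).injective (Subtype.ext hkl)

/-- The Vitali argument: a transversal of `C` has countably many disjoint translates of equal
measure covering the space. -/
theorem measure_univ_eq_zero_or_top_of_countable_infinite {G : Type*} [AddGroup G]
    [MeasurableSpace G] [DiscreteMeasurableSpace G] (ρ : Measure G) (C : AddSubgroup G)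
    (hCc : (C : Set G).Countable) (hCi : (C : Set G).Infinite)
    (hρ : ∀ c ∈ C, ∀ s, ρ ((c + ·) ⁻¹' s) = ρ s) : ρ univ = 0 ∨ ρ univ = ∞ := by
  obtain ⟨S, hS, -⟩ := AddSubgroup.exists_isComplement_right C 0
  have : Countable C := hCc.to_subtype
  have : Infinite C := hCi.to_subtype
  have hcover : univ = ⋃ c : C, (fun x => -(c : G) + x) ⁻¹' S := by
    refine (eq_univ_of_forall fun x => ?_).symm
    obtain ⟨⟨c, s⟩, hcs, -⟩ := hS.existsUnique x
    exact mem_iUnion.2 ⟨c, by simp [← hcs]⟩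
  have hdisj : Pairwise (Function.onFun Disjoint fun c : C => (fun x => -(c : G) + x) ⁻¹' S) := by
    refine fun c c' hne => disjoint_left.2 fun x hx hx' => hne ?_
    exact congrArg Prod.fst ((hS.existsUnique x).unique (y₁ := (c, ⟨_, hx⟩))
      (y₂ := (c', ⟨_, hx'⟩)) (by simp) (by simp))
  rw [hcover, measure_iUnion hdisj fun _ => .of_discrete]
  simp only [hρ _ (C.neg_mem (Subtype.prop _))]
  rcases eq_or_ne (ρ S) 0 with h | h
  · simp [h]
  · exact Or.inr (ENNReal.tsum_const_eq_top_of_ne_zero h)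

variable {ι F : Type*} [Fintype ι] [DecidableEq ι] [NormedAddCommGroup F] [IsUltrametricDist F]
  [MeasurableSpace F] [BorelSpace F]

theorem finite_image_mk_closedBall (μ : Measure (ι → F)) [μ.IsAddLeftInvariant]
    (hμ : μ (closedBall 0 1) = 1) (i : ι) (V : OpenAddSubgroup F) :
    ((QuotientAddGroup.mk : F → F ⧸ (V : AddSubgroup F)) '' closedBall 0 1).Finite := by
  set G := F ⧸ (V : AddSubgroup F)
  have : DiscreteMeasurableSpace G := ⟨fun s => measurableSet_quotient.2
    ((isOpen_discrete s).preimage continuous_quot_mk).measurableSet⟩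
  by_contra hinf
  obtain ⟨C, hCP, hCc, hCi⟩ := AddSubgroup.exists_le_countable_infinite
    (P := (IsUltrametricDist.closedBall_openAddSubgroup F one_pos).toAddSubgroup.map
      (QuotientAddGroup.mk' (V : AddSubgroup F))) hinf
  set φ : (ι → F) → G := fun x => (x i : G)
  have hφ : Measurable φ := QuotientAddGroup.measurable_coe.comp (measurable_pi_apply i)
  set ρ := (μ.restrict (closedBall 0 1)).map φ
  have hρ : ∀ c ∈ C, ∀ s, ρ ((c + ·) ⁻¹' s) = ρ s := by
    intro c hc s
    obtain ⟨t, ht, rfl⟩ := hCP hc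
    have ht1 : ‖(Pi.single i t : ι → F)‖ ≤ 1 := by
      rw [Pi.norm_single]
      exact mem_closedBall_zero_iff.1 ht
    have hpre : (fun x => (Pi.single i t : ι → F) + x) ⁻¹' (φ ⁻¹' s ∩ closedBall 0 1) =
        φ ⁻¹' ((QuotientAddGroup.mk' _ t + ·) ⁻¹' s) ∩ closedBall 0 1 := by
      ext x
      have hO : Pi.single i t + x ∈ closedBall 0 1 ↔ x ∈ closedBall 0 1 :=
        (IsUltrametricDist.closedBall_openAddSubgroup (ι → F) one_pos).add_mem_cancel_left
          (mem_closedBall_zero_iff.2 ht1)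
      simp only [mem_inter_iff, mem_preimage, hO, φ, Pi.add_apply, Pi.single_eq_same,
        QuotientAddGroup.mk'_apply, QuotientAddGroup.mk_add]
    rw [Measure.map_apply hφ .of_discrete, Measure.map_apply hφ .of_discrete,
      Measure.restrict_apply (hφ .of_discrete), Measure.restrict_apply (hφ .of_discrete), ← hpre,
      measure_preimage_add]
  have hρuniv : ρ univ = 1 := by
    rw [Measure.map_apply hφ .univ, preimage_univ, Measure.restrict_apply_univ, hμ]
  rcases measure_univ_eq_zero_or_top_of_countable_infinite ρ C hCc hCi hρ with h | h <;>
    simp [hρuniv] at h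

theorem isCompact_closedBall_of_isAddLeftInvariant [CompleteSpace F] (μ : Measure (ι → F))
    [μ.IsAddLeftInvariant] (hμ : μ (closedBall 0 1) = 1) (i : ι) :
    IsCompact (closedBall (0 : F) 1) := by
  refine TotallyBounded.isCompact_of_isClosed (totallyBounded_iff.2 fun ε hε => ?_)
    isClosed_closedBall
  set V := IsUltrametricDist.ball_openAddSubgroup F hε
  refine ⟨Quotient.out '' ((QuotientAddGroup.mk : F → F ⧸ (V : AddSubgroup F)) '' closedBall 0 1),
    (finite_image_mk_closedBall μ hμ i V).image _, fun x hx => mem_iUnion₂.2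
      ⟨_, mem_image_of_mem _ (mem_image_of_mem _ hx), ?_⟩⟩
  have hV := QuotientAddGroup.eq.1 (QuotientAddGroup.out_eq' (x : F ⧸ (V : AddSubgroup F)))
  rw [neg_add_eq_sub] at hV
  rwa [mem_ball, dist_comm, dist_eq_norm', ← mem_ball_zero_iff]

end FiniteResidues

theorem secondCountableTopology_of_isCompact_closedBall {F : Type*} [NormedField F]
    (h : IsCompact (closedBall (0 : F) 1)) : SecondCountableTopology F := by
  by_cases ht : ∃ t : F, 1 < ‖t‖
  · obtain ⟨t, ht⟩ := ht
    have : ProperSpace F := .of_seq_closedBall (x := 0) (tendsto_pow_atTop_atTop_of_one_lt ht)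
      (Eventually.of_forall fun k => by
        simpa [_root_.smul_closedBall _ _ zero_le_one] using h.smul (t ^ k))
    infer_instance
  · push Not at ht
    have : CompactSpace F := ⟨by simpa [closedBall, ht] using h⟩
    infer_instance

theorem borel_eq_generateFrom_ball_le {X : Type*} [PseudoMetricSpace X] [SecondCountableTopology X]
    {r : ℝ} (hr : 0 < r) :
    borel X = MeasurableSpace.generateFrom {B : Set X | ∃ x u, 0 < u ∧ u ≤ r ∧ B = ball x u} := by
  refine borel_eq_generateFrom_of_subbasis
    (TopologicalSpace.isTopologicalBasis_of_isOpen_of_nhds ?_ fun a U haU hU => ?_).eq_generateFrom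
  · rintro _ ⟨x, u, -, -, rfl⟩
    exact isOpen_ball
  · obtain ⟨ε, hε, hεU⟩ := Metric.isOpen_iff.1 hU a haU
    exact ⟨ball a (min ε r), ⟨a, _, lt_min hε hr, min_le_right _ _, rfl⟩,
      mem_ball_self (lt_min hε hr), (ball_subset_ball (min_le_left _ _)).trans hεU⟩

theorem isPiSystem_ball_le {X : Type*} [PseudoMetricSpace X] [IsUltrametricDist X] (r : ℝ) :
    IsPiSystem {B : Set X | ∃ x u, 0 < u ∧ u ≤ r ∧ B = ball x u} := by
  rintro _ ⟨x, u, hu, hur, rfl⟩ _ ⟨y, v, hv, hvr, rfl⟩ hne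
  rcases IsUltrametricDist.ball_subset_trichotomy (x := x) (y := y) (r := u) (s := v) with
    h | h | h
  · exact ⟨x, u, hu, hur, inter_eq_left.2 h⟩
  · exact ⟨y, v, hv, hvr, inter_eq_right.2 h⟩
  · exact absurd h.inter_eq hne.ne_empty

theorem IsCompact.exists_finset_pairwiseDisjoint_ball {X : Type*} [PseudoMetricSpace X]
    [IsUltrametricDist X] {O : Set X} (hO : IsCompact O) {r : ℝ} (hr : 0 < r)
    (hball : ∀ c ∈ O, ball c r ⊆ O) :
    ∃ t : Finset X, ↑t ⊆ O ∧ (t : Set X).PairwiseDisjoint (ball · r) ∧ O = ⋃ c ∈ t, ball c r := by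
  obtain ⟨t₀, ht₀O, ht₀, hcover⟩ := finite_cover_balls_of_compact hO hr
  obtain ⟨u, hut₀, hinj, himg⟩ := (surjOn_image (ball · r) t₀).exists_subset_injOn_image_eq
  have hu : ⋃ c ∈ t₀, ball c r = ⋃ c ∈ u, ball c r := by
    rw [← sUnion_image, ← himg, sUnion_image]
  refine ⟨(ht₀.subset hut₀).toFinset, by simpa using hut₀.trans ht₀O, fun c hc c' hc' hne => ?_, ?_⟩
  · rw [Finite.coe_toFinset] at hc hc'
    exact (IsUltrametricDist.ball_eq_or_disjoint c c' r).resolve_left fun h => hne (hinj hc hc' h)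
  · simp only [Finite.mem_toFinset]
    exact subset_antisymm (hu ▸ hcover) (iUnion₂_subset fun c hc => hball c (ht₀O (hut₀ hc)))

theorem ncard_fiber_biUnion {ι α β : Type*} {t : Finset ι} {b : ι → Set α}
    (hdisj : (t : Set ι).PairwiseDisjoint b) {f : α → β} (hinj : ∀ i ∈ t, InjOn f (b i))
    (y : β) : ({x | x ∈ ⋃ i ∈ t, b i ∧ f x = y}.ncard : ℝ≥0∞) =
      ∑ i ∈ t, (f '' b i).indicator 1 y := by
  classical
  -- splitting off `IsEmpty α` lets `choose!` below produce a total function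
  cases isEmpty_or_nonempty α
  · simp [Set.eq_empty_of_isEmpty]
  set Y := t.filter fun i => y ∈ f '' b i
  have hY : ∀ i ∈ Y, ∃ x ∈ b i, f x = y := fun i hi => (Finset.mem_filter.1 hi).2
  choose! g hgb hgy using hY
  have hfiber : {x | x ∈ ⋃ i ∈ t, b i ∧ f x = y} = g '' (Y : Set ι) := by
    ext x
    simp only [mem_ofPred_eq, mem_iUnion, mem_image, Finset.mem_coe]
    constructor
    · rintro ⟨⟨i, hi, hx⟩, rfl⟩
      have hiY : i ∈ Y := Finset.mem_filter.2 ⟨hi, x, hx, rfl⟩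
      exact ⟨i, hiY, hinj i hi (hgb i hiY) hx (hgy i hiY)⟩
    · rintro ⟨i, hi, rfl⟩
      exact ⟨⟨i, (Finset.mem_filter.1 hi).1, hgb i hi⟩, hgy i hi⟩
  have hginj : InjOn g (Y : Set ι) := fun i hi j hj hij => by
    by_contra hne
    exact (hdisj (Finset.mem_filter.1 hi).1 (Finset.mem_filter.1 hj).1 hne).le_bot
      ⟨hgb i hi, hij ▸ hgb j hj⟩
  rw [hfiber, hginj.ncard_image, ncard_coe_finset, Finset.card_filter, Nat.cast_sum]
  refine Finset.sum_congr rfl fun i _ => ?_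
  by_cases hi : y ∈ f '' b i <;> simp [hi]

theorem withDensity_ncard_le_smul_restrict_image {α β : Type*} [MeasurableSpace β]
    (μ : Measure β) {O : Set α} {f : α → β} (hS : MeasurableSet (f '' O)) {M : ℕ}
    (hM : ∀ y, {x | x ∈ O ∧ f x = y}.ncard ≤ M) :
    μ.withDensity (fun y => ({x | x ∈ O ∧ f x = y}.ncard : ℝ≥0∞)) ≤
      (M : ℝ≥0∞) • μ.restrict (f '' O) := by
  rw [← withDensity_const, ← withDensity_indicator hS]
  refine withDensity_mono (Eventually.of_forall fun y => ?_)
  by_cases hy : y ∈ f '' O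
  · rw [indicator_of_mem hy]; exact Nat.cast_le.2 (hM y)
  · have : {x | x ∈ O ∧ f x = y} = ∅ := eq_empty_of_forall_notMem fun x hx => hy ⟨x, hx⟩
    simp [this]

section PushforwardOnBalls

variable {E : Type*} [NormedAddCommGroup E] [MeasurableSpace E] [BorelSpace E]

theorem measure_ball_eq (μ : Measure E) [μ.IsAddLeftInvariant] (x y : E) (r : ℝ) :
    μ (ball x r) = μ (ball y r) := by
  rw [← measure_preimage_add μ (x - y), preimage_add_ball, sub_sub_cancel]

variable [IsUltrametricDist E] [SecondCountableTopology E]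

/-- Both sides agree on the π-system of smaller balls, which generates the Borel sets. -/
theorem map_restrict_ball_eq (μ : Measure E) [μ.IsAddLeftInvariant] {f : E → E}
    (hf : Measurable f) {c : E} {r : ℝ} (hr : 0 < r) (hμ : μ (ball c r) ≠ ∞)
    (hiso : ∀ x ∈ ball c r, ∀ y ∈ ball c r, dist (f x) (f y) = dist x y)
    (hsurj : ball (f c) r ⊆ f '' ball c r) :
    (μ.restrict (ball c r)).map f = μ.restrict (ball (f c) r) := by
  have : IsFiniteMeasure (μ.restrict (ball c r)) := isFiniteMeasure_restrict.2 hμ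
  have hmaps : ∀ w ∈ ball c r, f w ∈ ball (f c) r := fun w hw => by
    rwa [mem_ball, hiso w hw c (mem_ball_self hr)]
  refine ext_of_generate_finite _ (BorelSpace.measurable_eq.trans (borel_eq_generateFrom_ball_le hr))
    (isPiSystem_ball_le r) ?_ ?_
  · rintro _ ⟨x, u, hu, hur, rfl⟩
    rw [Measure.map_apply hf measurableSet_ball, Measure.restrict_apply (hf measurableSet_ball),
      Measure.restrict_apply measurableSet_ball]
    rcases (ball x u ∩ ball (f c) r).eq_empty_or_nonempty with h | ⟨z, hzx, hzc⟩
    · have : f ⁻¹' ball x u ∩ ball c r = ∅ :=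
        eq_empty_of_forall_notMem fun w ⟨hwx, hwc⟩ => h.subset ⟨hwx, hmaps w hwc⟩
      rw [this, h]
    · obtain ⟨z', hz'c, rfl⟩ := hsurj hzc
      have hB : ball x u = ball (f z') u := IsUltrametricDist.ball_eq_of_mem hzx
      have hBK : ball x u ⊆ ball (f c) r := by
        rw [hB, IsUltrametricDist.ball_eq_of_mem hzc]
        exact ball_subset_ball hur
      have hc : ball c r = ball z' r := IsUltrametricDist.ball_eq_of_mem hz'c
      have hpre : f ⁻¹' ball x u ∩ ball c r = ball z' u := by
        ext w
        refine ⟨fun ⟨hw, hwc⟩ => ?_, fun hw => ?_⟩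
        · rwa [mem_preimage, hB, mem_ball, hiso w hwc z' hz'c] at hw
        · have hwc : w ∈ ball c r := hc ▸ ball_subset_ball hur hw
          refine ⟨?_, hwc⟩
          rwa [mem_preimage, hB, mem_ball, hiso w hwc z' hz'c]
      rw [hpre, inter_eq_left.2 hBK, measure_ball_eq μ z' x u]
  · rw [Measure.map_apply hf MeasurableSet.univ, preimage_univ, Measure.restrict_apply_univ,
      Measure.restrict_apply_univ, measure_ball_eq]

theorem map_restrict_eq_withDensity_ncard (μ : Measure E) [μ.IsAddLeftInvariant] {O : Set E}
    (hO : IsCompact O) (hμO : μ O ≠ ∞) {f : E → E} (hf : Continuous f) {r : ℝ} (hr : 0 < r)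
    (hball : ∀ c ∈ O, ball c r ⊆ O)
    (hiso : ∀ x ∈ O, ∀ y ∈ O, dist x y < r → dist (f x) (f y) = dist x y)
    (hsurj : ∀ c ∈ O, ball (f c) r ⊆ f '' ball c r) :
    (μ.restrict O).map f = μ.withDensity fun y => ({x | x ∈ O ∧ f x = y}.ncard : ℝ≥0∞) := by
  obtain ⟨t, htO, hdisj, hcover⟩ := hO.exists_finset_pairwiseDisjoint_ball hr hball
  have hiso' : ∀ c ∈ O, ∀ x ∈ ball c r, ∀ y ∈ ball c r, dist (f x) (f y) = dist x y :=
    fun c hc x hx y hy => hiso x (hball c hc hx) y (hball c hc hy)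
      ((IsUltrametricDist.dist_triangle_max x c y).trans_lt (max_lt hx (mem_ball'.1 hy)))
  have himage : ∀ c ∈ O, f '' ball c r = ball (f c) r := fun c hc =>
    (image_subset_iff.2 fun x hx => by
      rw [mem_preimage, mem_ball, hiso' c hc x hx c (mem_ball_self hr)]; exact hx).antisymm
      (hsurj c hc)
  have hmap : ∀ c ∈ t,
      (μ.restrict (ball c r)).map f = μ.withDensity ((ball (f c) r).indicator 1) := fun c hc => by
    rw [withDensity_indicator_one measurableSet_ball]
    exact map_restrict_ball_eq μ hf.measurable hr
      (ne_top_of_le_ne_top hμO (measure_mono (hball c (htO hc)))) (hiso' c (htO hc))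
      (hsurj c (htO hc))
  have hcount : ∀ y, ∑' c : t, (ball (f c) r).indicator 1 y =
      ({x | x ∈ O ∧ f x = y}.ncard : ℝ≥0∞) := fun y => by
    have hinj : ∀ c ∈ t, InjOn f (ball c r) := fun c hc x hx x' hx' hxx' =>
      dist_eq_zero.1 ((hiso' c (htO hc) x hx x' hx').symm.trans (dist_eq_zero.2 hxx'))
    rw [tsum_fintype, Finset.sum_coe_sort t fun c => (ball (f c) r).indicator 1 y, hcover,
      ncard_fiber_biUnion hdisj hinj y]
    exact Finset.sum_congr rfl fun c hc => by rw [himage c (htO hc)]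
  calc (μ.restrict O).map f = (Measure.sum fun c : t => μ.restrict (ball c r)).map f := by
        rw [hcover, Measure.restrict_biUnion_finset hdisj fun _ => measurableSet_ball]
    _ = Measure.sum fun c : t => μ.withDensity ((ball (f c) r).indicator 1) := by
        rw [Measure.map_sum hf.measurable.aemeasurable]
        exact congrArg Measure.sum (funext fun c => hmap c c.2)
    _ = μ.withDensity fun y => ({x | x ∈ O ∧ f x = y}.ncard : ℝ≥0∞) := by
        rw [← withDensity_tsum fun _ => measurable_one.indicator measurableSet_ball]
        exact congrArg μ.withDensity (funext fun y =>
          (tsum_apply (Pi.summable.2 fun _ => ENNReal.summable)).trans (hcount y))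

end PushforwardOnBalls

/-- the pushforward of the normalized Haar measure of the unit
polydisc under a norm-one étale polynomial map has density equal to the number
of preimages; with at most `M` preimages everywhere, it is bounded by `M` times
Haar measure on the image. -/
theorem pushforward_haar_etale
    (F : Type*) [NormedField F] [CompleteSpace F]
    [MeasurableSpace F] [BorelSpace F]
    (hna : ∀ x y : F, ‖x + y‖ ≤ max ‖x‖ ‖y‖)
    (n : ℕ) (μ : Measure (Fin n → F))
    (hinv : ∀ (a : Fin n → F) (s : Set (Fin n → F)), μ ((fun x => a + x) ⁻¹' s) = μ s)
    (hnorm : μ {x | ∀ i, ‖x i‖ ≤ 1} = 1)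
    (γ : Fin n → MvPolynomial (Fin n) F)
    (hcoeff : ∀ i, ∀ m : Fin n →₀ ℕ, ‖(γ i).coeff m‖ ≤ 1)
    (hJ : ∀ x : Fin n → F, (∀ i, ‖x i‖ ≤ 1) →
      ‖(Matrix.of fun i j => MvPolynomial.eval x (MvPolynomial.pderiv j (γ i))).det‖ = 1)
    (M : ℕ)
    (hM : ∀ y : Fin n → F,
      {x : Fin n → F | (∀ i, ‖x i‖ ≤ 1) ∧
        (fun i => MvPolynomial.eval x (γ i)) = y}.ncard ≤ M) :
    (μ.restrict {x | ∀ i, ‖x i‖ ≤ 1}).map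
        (fun x : Fin n → F => fun i => MvPolynomial.eval x (γ i))
      = μ.withDensity (fun y =>
          ({x : Fin n → F | (∀ i, ‖x i‖ ≤ 1) ∧
            (fun i => MvPolynomial.eval x (γ i)) = y}.ncard : ℝ≥0∞)) ∧
    (μ.restrict {x | ∀ i, ‖x i‖ ≤ 1}).map
        (fun x : Fin n → F => fun i => MvPolynomial.eval x (γ i))
      ≤ (M : ℝ≥0∞) • μ.restrict
          ((fun x : Fin n → F => fun i => MvPolynomial.eval x (γ i)) ''
            {x | ∀ i, ‖x i‖ ≤ 1}) := by
  have : IsUltrametricDist F := .isUltrametricDist_of_forall_norm_add_le_max_norm hna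
  have hmemO : ∀ x : Fin n → F, (∀ i, ‖x i‖ ≤ 1) ↔ ‖x‖ ≤ 1 :=
    fun x => (pi_norm_le_iff_of_nonneg zero_le_one).symm
  have : μ.IsAddLeftInvariant := ⟨fun a => Measure.ext fun s hs => by
    rw [Measure.map_apply (measurable_const_add a) hs, hinv]⟩
  have hcompact : ∀ i : Fin n, IsCompact (closedBall (0 : F) 1) :=
    isCompact_closedBall_of_isAddLeftInvariant μ (by simpa [hmemO, closedBall] using hnorm)
  have : ∀ i : Fin n, SecondCountableTopology F :=
    fun i => secondCountableTopology_of_isCompact_closedBall (hcompact i)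
  have hγ : ∀ i, γ i ∈ unitBallTaylor (Fin n) F :=
    fun i => mem_unitBallTaylor_of_norm_coeff_le_one (hcoeff i)
  have hJ' : ∀ x : Fin n → F, ‖x‖ ≤ 1 → ‖(jacobian γ x).det‖ = 1 :=
    fun x hx => hJ x ((hmemO x).2 hx)
  have hOcompact : IsCompact {x : Fin n → F | ∀ i, ‖x i‖ ≤ 1} := by
    simpa [Set.pi] using isCompact_univ_pi hcompact
  have hpush := map_restrict_eq_withDensity_ncard μ hOcompact (hnorm ▸ ENNReal.one_ne_top)
    (continuous_polyMap γ) one_pos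
    (fun c hc x hx => (hmemO x).2 <| by
      simpa using (IsUltrametricDist.norm_add_le_max (x - c) c).trans
        (max_le (mem_ball_iff_norm.1 hx).le ((hmemO c).1 hc)))
    (fun x _ y hy => dist_polyMap_polyMap hγ hJ' ((hmemO y).1 hy))
    (fun c hc => ball_subset_image_polyMap hγ hJ' ((hmemO c).1 hc))
  exact ⟨hpush, hpush.trans_le (withDensity_ncard_le_smul_restrict_image μ
    (hOcompact.image (continuous_polyMap γ)).isClosed.measurableSet hM)⟩
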